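/- arXiv:2003.13492 — 5 statements merged into one kernel-verified Lean document; each statement's English description precedes it below -/
import Mathlib

section
/- Let n ≥ 1, and let K, L be integers with K > 2L ≥ 0. Set X = { a ∈ ℤⁿ : L ≤ a_i < K − L for i = 1, …, n }. Then for every φ ∈ ℓ²(ℤⁿ): (i) Σ_{b ∈ {0,…,K−1}ⁿ} Σ_{a ∈ X + Kℤⁿ} |φ(a + b)|² = (K − 2L)ⁿ · ‖φ‖², and (ii) consequently there exists b ∈ {0,…,K−1}ⁿ such that Σ_{a ∈ X + Kℤⁿ} |φ(a + b)|² ≥ (1 − 2L/K)ⁿ · ‖φ‖². -/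
/-!
Translating by `b` turns the sum over `X + Kℤⁿ` into the sum of `|φ|²` over those `z` with
`z - b ∈ X + Kℤⁿ`, i.e. with every `(zᵢ - bᵢ) mod K` in `[L, K - L)`. For fixed `z`, the map
`c ↦ (zᵢ - c) mod K` permutes `{0, …, K - 1}`, so exactly `(K - 2L)ⁿ` of the `Kⁿ` shifts `b` count
`z`.
-/

open Finset

theorem lp.hasSum_norm_sq {α : Type*} {E : α → Type*} [∀ i, NormedAddCommGroup (E i)]
    (f : lp E 2) : HasSum (fun i => ‖f i‖ ^ 2) (‖f‖ ^ 2) := by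
  simpa using lp.hasSum_norm (p := 2) (by norm_num) f

theorem sum_tsum_subtype_add_eq_nsmul_tsum {G ι α : Type*} [AddGroup G] [AddCommGroup α]
    [UniformSpace α] [IsUniformAddGroup α] [CompleteSpace α] [T2Space α]
    (B : Finset ι) (v : ι → G) (S : Set G) [DecidablePred (· ∈ S)] {F : G → α} (hF : Summable F)
    {m : ℕ} (hm : ∀ z, #{b ∈ B | z - v b ∈ S} = m) :
    ∑ b ∈ B, ∑' a : S, F (a + v b) = m • ∑' z, F z := by
  have shift (b : ι) : ∑' a : S, F (a + v b) = ∑' z, {z | z - v b ∈ S}.indicator F z := by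
    rw [_root_.tsum_subtype S (fun a => F (a + v b)), ← (Equiv.subRight (v b)).tsum_eq]
    congr 1 with z
    simp [Set.indicator_apply]
  calc ∑ b ∈ B, ∑' a : S, F (a + v b)
      = ∑' z, ∑ b ∈ B, {z | z - v b ∈ S}.indicator F z := by
        rw [Summable.tsum_finsetSum fun b _ => hF.indicator _]
        exact sum_congr rfl fun b _ => shift b
    _ = ∑' z, m • F z := by
        congr 1 with z
        simp [Set.indicator_apply, sum_ite, ← hm z]
    _ = m • ∑' z, F z := hF.tsum_nsmul m

theorem exists_box_add_mul_iff_emod {ι : Type*} {K L : ℤ} (hL : 0 ≤ L) (a : ι → ℤ) :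
    (∃ x c : ι → ℤ, (∀ i, L ≤ x i ∧ x i < K - L) ∧ a = fun i => x i + K * c i) ↔
      ∀ i, L ≤ a i % K ∧ a i % K < K - L := by
  constructor
  · rintro ⟨x, c, hx, rfl⟩ i
    have hxi : x i % K = x i := Int.emod_eq_of_lt (by grind) (by grind)
    simpa [Int.add_mul_emod_self_left, hxi] using hx i
  · intro h
    exact ⟨fun i => a i % K, fun i => a i / K, h, funext fun i => (Int.emod_add_mul_ediv _ _).symm⟩

theorem Fin.sum_emod_sub {M : Type*} [AddCommMonoid M] {K : ℕ} (hK : 0 < K) (g : ℤ → M) (z : ℤ) :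
    ∑ c : Fin K, g ((z - c) % K) = ∑ r : Fin K, g r := by
  obtain ⟨k, rfl⟩ : ∃ k, K = k + 1 := ⟨K - 1, by omega⟩
  -- `ZMod (k + 1)` is `Fin (k + 1)`, on which `c ↦ z - c` is a permutation.
  have h : ∀ c : ZMod (k + 1), (z - c.val) % (k + 1 : ℕ) = ((z - c : ZMod (k + 1)).val : ℤ) := by
    intro c
    rw [← ZMod.val_intCast]
    push_cast
    rw [ZMod.natCast_zmod_val]
  exact (Fintype.sum_congr _ _ fun c => congrArg g (h c)).trans
    ((Equiv.subLeft (z : ZMod (k + 1))).sum_comp (fun r : ZMod (k + 1) => g r.val))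

theorem Fin.card_filter_emod_sub_mem_Ico {K L : ℕ} (hK : 2 * L < K) (z : ℤ) :
    #{c : Fin K | (L : ℤ) ≤ (z - c) % K ∧ (z - c) % K < K - L} = K - 2 * L := by
  have hperm := Fin.sum_emod_sub (by omega : 0 < K)
    (fun r => if (L : ℤ) ≤ r ∧ r < K - L then 1 else 0) z
  simp only [sum_boole, Nat.cast_id] at hperm
  rw [hperm, card_filter,
    Fin.sum_univ_eq_sum_range (fun x : ℕ => if (L : ℤ) ≤ x ∧ (x : ℤ) < K - L then 1 else 0),
    ← card_filter]
  have hIco : (range K).filter (fun x : ℕ => (L : ℤ) ≤ x ∧ (x : ℤ) < K - L) = Ico L (K - L) := by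
    ext x
    simp only [mem_filter, mem_range, mem_Ico]
    omega
  rw [hIco, Nat.card_Ico]
  omega

theorem card_filter_forall_emod_sub_mem_Ico {ι : Type*} [Fintype ι] [DecidableEq ι] {K L : ℕ}
    (hK : 2 * L < K) (z : ι → ℤ) :
    #{b : ι → Fin K | ∀ i, (L : ℤ) ≤ (z i - b i) % K ∧ (z i - b i) % K < K - L} =
      (K - 2 * L) ^ Fintype.card ι := by
  have hpi : ({b : ι → Fin K | ∀ i, (L : ℤ) ≤ (z i - b i) % K ∧ (z i - b i) % K < K - L} :
      Finset _) =
      Fintype.piFinset fun i => {c : Fin K | (L : ℤ) ≤ (z i - c) % K ∧ (z i - c) % K < K - L} := by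
    ext b
    simp
  simp [hpi, Fintype.card_piFinset, Fin.card_filter_emod_sub_mem_Ico hK]

theorem stmt_10_general (n : ℕ) (K L : ℕ) (hK : 2 * L < K)
    (φ : lp (fun _ : Fin n → ℤ => ℂ) 2) :
    (∑ b : Fin n → Fin K,
        ∑' a : {a : Fin n → ℤ | ∃ x c : Fin n → ℤ,
            (∀ i, (L : ℤ) ≤ x i ∧ x i < (K : ℤ) - (L : ℤ)) ∧ a = fun i => x i + K * c i},
          ‖φ ((a : Fin n → ℤ) + fun i => ((b i : ℤ)))‖ ^ 2)
      = ((K : ℝ) - 2 * (L : ℝ)) ^ n * ‖φ‖ ^ 2 ∧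
    ∃ b : Fin n → Fin K,
      (1 - 2 * (L : ℝ) / (K : ℝ)) ^ n * ‖φ‖ ^ 2 ≤
        ∑' a : {a : Fin n → ℤ | ∃ x c : Fin n → ℤ,
            (∀ i, (L : ℤ) ≤ x i ∧ x i < (K : ℤ) - (L : ℤ)) ∧ a = fun i => x i + K * c i},
          ‖φ ((a : Fin n → ℤ) + fun i => ((b i : ℤ)))‖ ^ 2 := by
  classical
  have : NeZero K := ⟨by omega⟩
  set X : Set (Fin n → ℤ) := {a | ∃ x c : Fin n → ℤ,
    (∀ i, (L : ℤ) ≤ x i ∧ x i < (K : ℤ) - (L : ℤ)) ∧ a = fun i => x i + K * c i} with hX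
  have hφ := lp.hasSum_norm_sq φ
  have part_i := sum_tsum_subtype_add_eq_nsmul_tsum univ
    (fun (b : Fin n → Fin K) i => ((b i : ℕ) : ℤ)) X hφ.summable (m := (K - 2 * L) ^ n)
    fun z => by
      convert card_filter_forall_emod_sub_mem_Ico hK z using 3
      · simp only [hX, Set.mem_ofPred_eq, exists_box_add_mul_iff_emod (Int.natCast_nonneg L),
          Pi.sub_apply]
      · simp
  rw [hφ.tsum_eq, nsmul_eq_mul, Nat.cast_pow, Nat.cast_sub (by omega)] at part_i
  push_cast at part_i
  refine ⟨part_i, ?_⟩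
  have hK₀ : (K : ℝ) ≠ 0 := Nat.cast_ne_zero.2 (by omega)
  obtain ⟨b, -, hb⟩ := exists_le_of_sum_le univ_nonempty
    (f := fun _ => (1 - 2 * (L : ℝ) / K) ^ n * ‖φ‖ ^ 2) <| le_of_eq <| by
      rw [part_i, sum_const, card_univ, Fintype.card_fun, Fintype.card_fin, Fintype.card_fin,
        nsmul_eq_mul, Nat.cast_pow, ← mul_assoc, ← mul_pow, mul_one_sub, mul_div_cancel₀ _ hK₀]
  exact ⟨b, hb⟩

/-- Box decomposition estimate: with X = {a ∈ ℤⁿ : L ≤ aᵢ < K − L}, for every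
φ ∈ ℓ²(ℤⁿ): (i) Σ_{b ∈ {0,…,K−1}ⁿ} Σ_{a ∈ X + Kℤⁿ} |φ(a+b)|² = (K−2L)ⁿ‖φ‖², and
(ii) there is b ∈ {0,…,K−1}ⁿ with Σ_{a ∈ X + Kℤⁿ} |φ(a+b)|² ≥ (1 − 2L/K)ⁿ‖φ‖². -/
theorem stmt_10 (n : ℕ) (hn : 1 ≤ n) (K L : ℕ) (hK : 2 * L < K)
    (φ : lp (fun _ : Fin n → ℤ => ℂ) 2) :
    (∑ b : Fin n → Fin K,
        ∑' a : {a : Fin n → ℤ | ∃ x c : Fin n → ℤ,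
            (∀ i, (L : ℤ) ≤ x i ∧ x i < (K : ℤ) - (L : ℤ)) ∧ a = fun i => x i + K * c i},
          ‖φ ((a : Fin n → ℤ) + fun i => ((b i : ℤ)))‖ ^ 2)
      = ((K : ℝ) - 2 * (L : ℝ)) ^ n * ‖φ‖ ^ 2 ∧
    ∃ b : Fin n → Fin K,
      (1 - 2 * (L : ℝ) / (K : ℝ)) ^ n * ‖φ‖ ^ 2 ≤
        ∑' a : {a : Fin n → ℤ | ∃ x c : Fin n → ℤ,
            (∀ i, (L : ℤ) ≤ x i ∧ x i < (K : ℤ) - (L : ℤ)) ∧ a = fun i => x i + K * c i},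
          ‖φ ((a : Fin n → ℤ) + fun i => ((b i : ℤ)))‖ ^ 2 :=
  stmt_10_general n K L hK φ
end

section
/- (Von Neumann's condition.) Let m, m' ≥ 1, let k_1, …, k_m, k'_1, …, k'_{m'} ∈ ℤⁿ, and let h_1, …, h_m, h'_1, …, h'_{m'} : ℝⁿ → ℂ be bounded and Lipschitz continuous. Then lim_{ℏ → 0⁺} ‖ (Σ_{j=1}^m T_{k_j,h_j,ℏ}) ∘ (Σ_{i=1}^{m'} T_{k'_i,h'_i,ℏ}) − Σ_{j=1}^m Σ_{i=1}^{m'} T_{k_j + k'_i, h_j·h'_i, ℏ} ‖ = 0, where the norm is the operator norm on ℓ²(ℤⁿ). In other words, for f = Σ_j e_{k_j} ⊗ h_j and g = Σ_i e_{k'_i} ⊗ h'_i one has ‖Q^W_ℏ(f) Q^W_ℏ(g) − Q^W_ℏ(fg)‖ → 0 as ℏ → 0. -/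
open scoped Real
open Filter MeasureTheory

noncomputable section

/-- `ℓ²(ℤⁿ)` with values in `ℂ`. -/
abbrev ℓ2 (n : ℕ) := lp (fun _ : Fin n → ℤ => ℂ) 2

/-!
On `ℓ²(ℤⁿ)` each `T_{k,h,ℏ}` is a weighted shift by `k`, so `T_{k,h,ℏ} T_{k',h',ℏ} - T_{k+k',hh',ℏ}`
is a weighted shift by `k + k'` and its norm is the supremum of its weights. At the site `a`
the composition samples `h` at `πℏ(2a - k)` and `h'` at `πℏ(2a - 2k - k')`, whereas the product
term samples both at `πℏ(2a - k - k')`. These points are `πℏk'` and `πℏk` apart, so boundedness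
and the Lipschitz property of `h, h'` bound every weight, hence the norm, by `O(ℏ)`.
-/

open scoped NNReal

lemma opNorm_le_of_norm_apply_le_shift {𝕜 G E F : Type*} [NontriviallyNormedField 𝕜] [AddGroup G]
    [NormedAddCommGroup E] [NormedSpace 𝕜 E] [NormedAddCommGroup F] [NormedSpace 𝕜 F]
    {p : ENNReal} [Fact (1 ≤ p)] (hp : p ≠ ⊤)
    (D : lp (fun _ : G => E) p →L[𝕜] lp (fun _ : G => F) p) (s : G) {M : ℝ} (hM : 0 ≤ M)
    (hD : ∀ φ a, ‖D φ a‖ ≤ M * ‖φ (a - s)‖) :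
    ‖D‖ ≤ M := by
  have hp₀ : 0 < p.toReal := ENNReal.toReal_pos (zero_lt_one.trans_le Fact.out).ne' hp
  refine D.opNorm_le_bound hM fun φ => lp.norm_le_of_tsum_le hp₀ (by positivity) ?_
  have hφ : Summable fun b => ‖φ b‖ ^ p.toReal := (lp.memℓp φ).summable hp₀
  calc ∑' a, ‖D φ a‖ ^ p.toReal
      ≤ ∑' a, M ^ p.toReal * ‖φ (a - s)‖ ^ p.toReal := by
        refine Summable.tsum_le_tsum (fun a => ?_) ((lp.memℓp (D φ)).summable hp₀)
          (((Equiv.subRight s).summable_iff.2 hφ).mul_left _)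
        rw [← Real.mul_rpow hM (norm_nonneg _)]
        exact Real.rpow_le_rpow (norm_nonneg _) (hD φ a) hp₀.le
    _ = M ^ p.toReal * ∑' b, ‖φ b‖ ^ p.toReal := by
        rw [tsum_mul_left]
        congr 1
        exact (Equiv.subRight s).tsum_eq fun b => ‖φ b‖ ^ p.toReal
    _ = M ^ p.toReal * ‖φ‖ ^ p.toReal := by rw [lp.norm_rpow_eq_tsum hp₀]
    _ = (M * ‖φ‖) ^ p.toReal := (Real.mul_rpow hM (norm_nonneg _)).symm

lemma norm_mul_sub_mul_le {α R : Type*} [PseudoMetricSpace α] [NonUnitalSeminormedRing R]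
    {f g : α → R} {Cf Cg : ℝ} {Lf Lg : ℝ≥0} (hf : ∀ x, ‖f x‖ ≤ Cf) (hg : ∀ x, ‖g x‖ ≤ Cg)
    (hLf : LipschitzWith Lf f) (hLg : LipschitzWith Lg g) (x y z : α) :
    ‖f x * g y - f z * g z‖ ≤ Cf * (Lg * dist y z) + Lf * dist x z * Cg :=
  calc ‖f x * g y - f z * g z‖ = ‖f x * (g y - g z) + (f x - f z) * g z‖ := by
        rw [mul_sub, sub_mul, sub_add_sub_cancel]
    _ ≤ ‖f x‖ * ‖g y - g z‖ + ‖f x - f z‖ * ‖g z‖ :=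
        (norm_add_le _ _).trans (add_le_add (norm_mul_le _ _) (norm_mul_le _ _))
    _ ≤ Cf * (Lg * dist y z) + Lf * dist x z * Cg := by
        rw [← dist_eq_norm, ← dist_eq_norm]
        gcongr
        · exact (norm_nonneg _).trans (hf x)
        · exact hf x
        · exact hLg.dist_le_mul y z
        · exact hLf.dist_le_mul x z
        · exact hg z

lemma norm_sum_mul_sum_sub_le {ι κ R : Type*} [SeminormedRing R] (s : Finset ι) (t : Finset κ)
    (a : ι → R) (b : κ → R) (c : ι → κ → R) :
    ‖(∑ j ∈ s, a j) * (∑ i ∈ t, b i) - ∑ j ∈ s, ∑ i ∈ t, c j i‖ ≤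
      ∑ j ∈ s, ∑ i ∈ t, ‖a j * b i - c j i‖ := by
  rw [Finset.sum_mul_sum, ← Finset.sum_sub_distrib]
  simp_rw [← Finset.sum_sub_distrib]
  exact (norm_sum_le _ _).trans (Finset.sum_le_sum fun j _ => norm_sum_le _ _)

def weylPoint {n : ℕ} (ℏ : ℝ) (a k : Fin n → ℤ) : Fin n → ℝ :=
  fun t => π * ℏ * (2 * (a t : ℝ) - (k t : ℝ))

lemma dist_weylPoint_add {n : ℕ} {ℏ : ℝ} (hℏ : 0 ≤ ℏ) (a k k' : Fin n → ℤ) :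
    dist (weylPoint ℏ a k) (weylPoint ℏ a (k + k')) = π * ℏ * ‖fun t => (k' t : ℝ)‖ := by
  have : weylPoint ℏ a k - weylPoint ℏ a (k + k') = (π * ℏ) • fun t => (k' t : ℝ) := by
    ext t
    simp only [weylPoint, Pi.sub_apply, Pi.add_apply, Int.cast_add, Pi.smul_apply, smul_eq_mul]
    ring
  rw [dist_eq_norm, this, norm_smul, Real.norm_of_nonneg (by positivity)]

lemma dist_weylPoint_sub_add {n : ℕ} {ℏ : ℝ} (hℏ : 0 ≤ ℏ) (a k k' : Fin n → ℤ) :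
    dist (weylPoint ℏ (a - k) k') (weylPoint ℏ a (k + k')) = π * ℏ * ‖fun t => (k t : ℝ)‖ := by
  have : weylPoint ℏ (a - k) k' - weylPoint ℏ a (k + k') = -(π * ℏ) • fun t => (k t : ℝ) := by
    ext t
    simp only [weylPoint, Pi.sub_apply, Pi.add_apply, Int.cast_sub, Int.cast_add, Pi.smul_apply,
      smul_eq_mul]
    ring
  rw [dist_eq_norm, this, norm_smul, norm_neg, Real.norm_of_nonneg (by positivity)]

lemma norm_comp_sub_le_of_weylPoint {n : ℕ} {ℏ : ℝ} (hℏ : 0 ≤ ℏ) {A B P : ℓ2 n →L[ℂ] ℓ2 n}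
    {f g : (Fin n → ℝ) → ℂ} {k k' : Fin n → ℤ} {Cf Cg : ℝ} {Lf Lg : ℝ≥0}
    (hf : ∀ x, ‖f x‖ ≤ Cf) (hg : ∀ x, ‖g x‖ ≤ Cg)
    (hLf : LipschitzWith Lf f) (hLg : LipschitzWith Lg g)
    (hA : ∀ φ a, A φ a = f (weylPoint ℏ a k) * φ (a - k))
    (hB : ∀ φ a, B φ a = g (weylPoint ℏ a k') * φ (a - k'))
    (hP : ∀ φ a, P φ a = (f * g) (weylPoint ℏ a (k + k')) * φ (a - (k + k'))) :
    ‖A.comp B - P‖ ≤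
      ℏ * (π * (Cf * Lg * ‖fun t => (k t : ℝ)‖ + Lf * ‖fun t => (k' t : ℝ)‖ * Cg)) := by
  have hCf : 0 ≤ Cf := (norm_nonneg _).trans (hf 0)
  have hCg : 0 ≤ Cg := (norm_nonneg _).trans (hg 0)
  refine opNorm_le_of_norm_apply_le_shift ENNReal.ofNat_ne_top _ (k + k') (by positivity)
    fun φ a => ?_
  rw [sub_apply, lp.coeFn_sub, Pi.sub_apply, ContinuousLinearMap.comp_apply,
    hA, hB, hP, Pi.mul_apply, sub_sub, ← mul_assoc, ← sub_mul, norm_mul]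
  gcongr
  calc _ ≤ Cf * (Lg * dist (weylPoint ℏ (a - k) k') (weylPoint ℏ a (k + k'))) +
        Lf * dist (weylPoint ℏ a k) (weylPoint ℏ a (k + k')) * Cg :=
        norm_mul_sub_mul_le hf hg hLf hLg _ _ _
    _ = _ := by rw [dist_weylPoint_add hℏ, dist_weylPoint_sub_add hℏ]; ring

theorem stmt_13_general (n : ℕ) (m m' : ℕ)
    (k : Fin m → Fin n → ℤ) (k' : Fin m' → Fin n → ℤ)
    (h : Fin m → (Fin n → ℝ) → ℂ) (h' : Fin m' → (Fin n → ℝ) → ℂ)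
    (hbd : ∀ j, ∃ C : ℝ, ∀ p, ‖h j p‖ ≤ C)
    (hbd' : ∀ i, ∃ C : ℝ, ∀ p, ‖h' i p‖ ≤ C)
    (hlip : ∀ j, ∃ C : NNReal, LipschitzWith C (h j))
    (hlip' : ∀ i, ∃ C : NNReal, LipschitzWith C (h' i))
    (T : ℝ → Fin m → (ℓ2 n →L[ℂ] ℓ2 n))
    (T' : ℝ → Fin m' → (ℓ2 n →L[ℂ] ℓ2 n))
    (TP : ℝ → Fin m → Fin m' → (ℓ2 n →L[ℂ] ℓ2 n))
    (hT : ∀ ℏ : ℝ, 0 < ℏ → ∀ (j : Fin m) (φ : ℓ2 n) (a : Fin n → ℤ),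
      ((T ℏ j) φ) a = h j (fun i => π * ℏ * (2 * (a i : ℝ) - (k j i : ℝ))) * φ (a - k j))
    (hT' : ∀ ℏ : ℝ, 0 < ℏ → ∀ (i : Fin m') (φ : ℓ2 n) (a : Fin n → ℤ),
      ((T' ℏ i) φ) a = h' i (fun t => π * ℏ * (2 * (a t : ℝ) - (k' i t : ℝ))) * φ (a - k' i))
    (hTP : ∀ ℏ : ℝ, 0 < ℏ → ∀ (j : Fin m) (i : Fin m') (φ : ℓ2 n) (a : Fin n → ℤ),
      ((TP ℏ j i) φ) a = (h j * h' i) (fun t => π * ℏ * (2 * (a t : ℝ) - ((k j + k' i) t : ℝ))) *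
        φ (a - (k j + k' i))) :
    Tendsto (fun ℏ : ℝ =>
        ‖(∑ j, T ℏ j).comp (∑ i, T' ℏ i) - ∑ j, ∑ i, TP ℏ j i‖)
      (nhdsWithin 0 (Set.Ioi 0)) (nhds 0) := by
  choose C hC using hbd
  choose C' hC' using hbd'
  choose L hL using hlip
  choose L' hL' using hlip'
  set c := ∑ j, ∑ i,
    π * (C j * L' i * ‖fun t => (k j t : ℝ)‖ + L j * ‖fun t => (k' i t : ℝ)‖ * C' i)
  have hlinear : ∀ ℏ > 0, ‖(∑ j, T ℏ j).comp (∑ i, T' ℏ i) - ∑ j, ∑ i, TP ℏ j i‖ ≤ ℏ * c :=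
    fun ℏ hℏ => calc
      _ ≤ ∑ j, ∑ i, ‖T ℏ j * T' ℏ i - TP ℏ j i‖ := norm_sum_mul_sum_sub_le _ _ _ _ _
      _ ≤ ∑ j, ∑ i, ℏ *
          (π * (C j * L' i * ‖fun t => (k j t : ℝ)‖ + L j * ‖fun t => (k' i t : ℝ)‖ * C' i)) := by
        gcongr with j _ i _
        exact norm_comp_sub_le_of_weylPoint hℏ.le (hC j) (hC' i) (hL j) (hL' i)
          (hT ℏ hℏ j) (hT' ℏ hℏ i) (hTP ℏ hℏ j i)
      _ = ℏ * c := by simp_rw [c, Finset.mul_sum]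
  refine squeeze_zero' (Eventually.of_forall fun _ => norm_nonneg _)
    (eventually_nhdsWithin_of_forall hlinear) ?_
  exact ((continuous_mul_const c).tendsto' 0 0 (zero_mul c)).mono_left nhdsWithin_le_nhds

/-- Von Neumann's condition: ‖Q^W_ℏ(f) Q^W_ℏ(g) − Q^W_ℏ(fg)‖ → 0 as ℏ → 0⁺, for
f = Σ_j e_{k_j} ⊗ h_j and g = Σ_i e_{k'_i} ⊗ h'_i with all h_j, h'_i bounded Lipschitz. -/
theorem stmt_13 (n : ℕ) (hn : 1 ≤ n) (m m' : ℕ) (hm : 1 ≤ m) (hm' : 1 ≤ m')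
    (k : Fin m → Fin n → ℤ) (k' : Fin m' → Fin n → ℤ)
    (h : Fin m → (Fin n → ℝ) → ℂ) (h' : Fin m' → (Fin n → ℝ) → ℂ)
    (hbd : ∀ j, ∃ C : ℝ, ∀ p, ‖h j p‖ ≤ C)
    (hbd' : ∀ i, ∃ C : ℝ, ∀ p, ‖h' i p‖ ≤ C)
    (hlip : ∀ j, ∃ C : NNReal, LipschitzWith C (h j))
    (hlip' : ∀ i, ∃ C : NNReal, LipschitzWith C (h' i))
    (T : ℝ → Fin m → (ℓ2 n →L[ℂ] ℓ2 n))
    (T' : ℝ → Fin m' → (ℓ2 n →L[ℂ] ℓ2 n))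
    (TP : ℝ → Fin m → Fin m' → (ℓ2 n →L[ℂ] ℓ2 n))
    (hT : ∀ ℏ : ℝ, 0 < ℏ → ∀ (j : Fin m) (φ : ℓ2 n) (a : Fin n → ℤ),
      ((T ℏ j) φ) a = h j (fun i => π * ℏ * (2 * (a i : ℝ) - (k j i : ℝ))) * φ (a - k j))
    (hT' : ∀ ℏ : ℝ, 0 < ℏ → ∀ (i : Fin m') (φ : ℓ2 n) (a : Fin n → ℤ),
      ((T' ℏ i) φ) a = h' i (fun t => π * ℏ * (2 * (a t : ℝ) - (k' i t : ℝ))) * φ (a - k' i))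
    (hTP : ∀ ℏ : ℝ, 0 < ℏ → ∀ (j : Fin m) (i : Fin m') (φ : ℓ2 n) (a : Fin n → ℤ),
      ((TP ℏ j i) φ) a = (h j * h' i) (fun t => π * ℏ * (2 * (a t : ℝ) - ((k j + k' i) t : ℝ))) *
        φ (a - (k j + k' i))) :
    Tendsto (fun ℏ : ℝ =>
        ‖(∑ j, T ℏ j).comp (∑ i, T' ℏ i) - ∑ j, ∑ i, TP ℏ j i‖)
      (nhdsWithin 0 (Set.Ioi 0)) (nhds 0) :=
  stmt_13_general n m m' k k' h h' hbd hbd' hlip hlip' T T' TP hT hT' hTP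
end
end

section
/- (Dirac's condition.) Let m, m' ≥ 1, let k_1, …, k_m, k'_1, …, k'_{m'} ∈ ℤⁿ, and let h_1, …, h_m, h'_1, …, h'_{m'} : ℝⁿ → ℂ be twice continuously differentiable functions that are bounded and have bounded first- and second-order derivatives. For 1 ≤ j ≤ m and 1 ≤ i ≤ m' define b_{j,i} : ℝⁿ → ℂ by b_{j,i}(p) = 2πi( (∇_{k'_i} h_j)(p) · h'_i(p) − h_j(p) · (∇_{k_j} h'_i)(p) ), where ∇_v h(p) denotes the directional derivative of h at p in the direction v ∈ ℝⁿ. Then, writing T_f = Σ_j T_{k_j,h_j,ℏ} and T_g = Σ_i T_{k'_i,h'_i,ℏ}, one has lim_{ℏ → 0⁺} ‖ (−iℏ)^{−1} (T_f T_g − T_g T_f) − Σ_{j=1}^m Σ_{i=1}^{m'} T_{k_j + k'_i, b_{j,i}, ℏ} ‖ = 0, where the norm is the operator norm on ℓ²(ℤⁿ). In other words, for f = Σ_j e_{k_j} ⊗ h_j and g = Σ_i e_{k'_i} ⊗ h'_i one has ‖(−iℏ)^{−1}[Q^W_ℏ(f), Q^W_ℏ(g)] − Q^W_ℏ({f,g})‖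 → 0 as ℏ → 0, where {f,g} = Σ_{j,i} e_{k_j+k'_i} ⊗ b_{j,i} is the canonical Poisson bracket on T*𝕋ⁿ. -/
open scoped Real
open Filter MeasureTheory

noncomputable section

/-!
Each `T_{k,h,ℏ}` is a weighted shift on `ℓ²(ℤⁿ)`, and the operator norm of a weighted shift is at
most the supremum of its weight. Weighted shifts compose to weighted shifts, so
`(-iℏ)⁻¹ [T_{k,h,ℏ}, T_{k',h',ℏ}] - T_{k+k',b,ℏ}` is the shift by `k + k'` with weight
`(-iℏ)⁻¹ (h(P + u') h'(P - u) - h(P - u') h'(P + u)) - b(P)`, where `P = πℏ(2a - k - k')`,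
`u = πℏk` and `u' = πℏk'`. Expanding `h` and `h'` to second order around `P`, the first-order
terms produce exactly `b(P)`, and the remainders are `O(ℏ)` uniformly in `a` because the
derivatives of order at most two are bounded. Summing over the finitely many pairs `(j, i)`
gives the limit.
-/

open scoped ENNReal

section Calculus

variable {E F : Type*} [NormedAddCommGroup E] [NormedSpace ℝ E]
  [NormedAddCommGroup F] [NormedSpace ℝ F]

theorem norm_image_add_sub_sub_fderiv_le {f : E → F} (hf : ContDiff ℝ 2 f) {C : ℝ}
    (hC : ∀ x, ‖iteratedFDeriv ℝ 2 f x‖ ≤ C) (p v : E) :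
    ‖f (p + v) - f p - fderiv ℝ f p v‖ ≤ C * ‖v‖ ^ 2 := by
  have hD2 : ∀ x, ‖fderiv ℝ (fderiv ℝ f) x‖ ≤ C := fun x => by
    rw [← norm_iteratedFDeriv_zero (𝕜 := ℝ) (f := fderiv ℝ (fderiv ℝ f)),
      norm_iteratedFDeriv_fderiv, norm_iteratedFDeriv_fderiv]
    exact hC x
  have hDf_lip : ∀ z, ‖fderiv ℝ f z - fderiv ℝ f p‖ ≤ C * ‖z - p‖ := fun z =>
    convex_univ.norm_image_sub_le_of_norm_fderiv_le
      (fun x _ => ((hf.fderiv_right (m := 1) le_rfl).differentiable one_ne_zero) x)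
      (fun x _ => hD2 x) (Set.mem_univ p) (Set.mem_univ z)
  have := (convex_closedBall p ‖v‖).norm_image_sub_le_of_norm_fderiv_le' (y := p + v)
    (fun x _ => hf.differentiable two_ne_zero x)
    (fun z hz => (hDf_lip z).trans <|
      mul_le_mul_of_nonneg_left (mem_closedBall_iff_norm.mp hz) ((norm_nonneg _).trans (hC p)))
    (Metric.mem_closedBall_self (norm_nonneg v)) (by simp)
  simpa [sq, mul_assoc] using this

theorem norm_image_sub_sub_add_fderiv_le {f : E → F} (hf : ContDiff ℝ 2 f) {C : ℝ}
    (hC : ∀ x, ‖iteratedFDeriv ℝ 2 f x‖ ≤ C) (p v : E) :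
    ‖f (p - v) - f p + fderiv ℝ f p v‖ ≤ C * ‖v‖ ^ 2 := by
  simpa [sub_eq_add_neg] using norm_image_add_sub_sub_fderiv_le hf hC p (-v)

theorem norm_shifted_mul_sub_shifted_mul_sub_le {f g : E → ℂ} (hf : ContDiff ℝ 2 f)
    (hg : ContDiff ℝ 2 g) {Cf₀ Cf₁ Cf₂ Cg₀ Cg₂ : ℝ}
    (hf₀ : ∀ x, ‖f x‖ ≤ Cf₀) (hf₁ : ∀ x, ‖fderiv ℝ f x‖ ≤ Cf₁)
    (hf₂ : ∀ x, ‖iteratedFDeriv ℝ 2 f x‖ ≤ Cf₂)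
    (hg₀ : ∀ x, ‖g x‖ ≤ Cg₀) (hg₂ : ∀ x, ‖iteratedFDeriv ℝ 2 g x‖ ≤ Cg₂) (p u u' : E) :
    ‖f (p + u') * g (p - u) - f (p - u') * g (p + u)
        - 2 * (fderiv ℝ f p u' * g p - f p * fderiv ℝ g p u)‖
      ≤ 2 * Cf₀ * Cg₂ * ‖u‖ ^ 2 + 2 * Cf₁ * Cg₂ * ‖u'‖ * ‖u‖ ^ 2
        + 2 * Cf₂ * Cg₀ * ‖u'‖ ^ 2 := by
  set F := f p
  set DF := fderiv ℝ f p u'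
  set r₁ := f (p + u') - F - DF
  set r₂ := f (p - u') - F + DF
  set s₁ := g (p + u) - g p - fderiv ℝ g p u
  set s₂ := g (p - u) - g p + fderiv ℝ g p u
  have hr₁ : ‖r₁‖ ≤ Cf₂ * ‖u'‖ ^ 2 := norm_image_add_sub_sub_fderiv_le hf hf₂ p u'
  have hr₂ : ‖r₂‖ ≤ Cf₂ * ‖u'‖ ^ 2 := norm_image_sub_sub_add_fderiv_le hf hf₂ p u'
  have hs₁ : ‖s₁‖ ≤ Cg₂ * ‖u‖ ^ 2 := norm_image_add_sub_sub_fderiv_le hg hg₂ p u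
  have hs₂ : ‖s₂‖ ≤ Cg₂ * ‖u‖ ^ 2 := norm_image_sub_sub_add_fderiv_le hg hg₂ p u
  have hDF : ‖DF‖ ≤ Cf₁ * ‖u'‖ := (fderiv ℝ f p).le_of_opNorm_le (hf₁ p) u'
  -- `r₁, r₂, s₁, s₂` are second-order Taylor remainders; the products of first-order terms cancel.
  have expand : f (p + u') * g (p - u) - f (p - u') * g (p + u)
      - 2 * (DF * g p - F * fderiv ℝ g p u)
      = F * (s₂ - s₁) + DF * (s₂ + s₁) + r₁ * g (p - u) - r₂ * g (p + u) := by
    simp only [F, DF, r₁, r₂, s₁, s₂]; ring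
  have hCf₀ : 0 ≤ Cf₀ := (norm_nonneg _).trans (hf₀ p)
  have hCf₁ : 0 ≤ Cf₁ := (norm_nonneg _).trans (hf₁ p)
  have hCf₂ : 0 ≤ Cf₂ := (norm_nonneg _).trans (hf₂ p)
  rw [expand]
  calc _ ≤ ‖F‖ * (‖s₂‖ + ‖s₁‖) + ‖DF‖ * (‖s₂‖ + ‖s₁‖) + ‖r₁‖ * ‖g (p - u)‖
          + ‖r₂‖ * ‖g (p + u)‖ := by
        refine (norm_sub_le _ _).trans ?_
        simp only [← norm_mul]
        gcongr
        refine (norm_add₃_le).trans ?_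
        gcongr
        · exact norm_mul_le_of_le le_rfl (norm_sub_le _ _)
        · exact norm_mul_le_of_le le_rfl (norm_add_le _ _)
    _ ≤ Cf₀ * (Cg₂ * ‖u‖ ^ 2 + Cg₂ * ‖u‖ ^ 2) + Cf₁ * ‖u'‖ * (Cg₂ * ‖u‖ ^ 2 + Cg₂ * ‖u‖ ^ 2)
          + Cf₂ * ‖u'‖ ^ 2 * Cg₀ + Cf₂ * ‖u'‖ ^ 2 * Cg₀ := by
        gcongr <;> first | exact hf₀ p | exact hg₀ _
    _ = _ := by ring

/-- The coefficient `b` in `{e_κ ⊗ f, e_κ' ⊗ g} = e_{κ + κ'} ⊗ b`, for `v, v'` the images of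
`κ, κ'` in `ℝⁿ`. -/
def poissonCoeff (f g : E → ℂ) (v v' p : E) : ℂ :=
  2 * π * Complex.I * (fderiv ℝ f p v' * g p - f p * fderiv ℝ g p v)

theorem norm_smul_sub_poissonCoeff_le {f g : E → ℂ} (hf : ContDiff ℝ 2 f)
    (hg : ContDiff ℝ 2 g) {Cf₀ Cf₁ Cf₂ Cg₀ Cg₂ : ℝ}
    (hf₀ : ∀ x, ‖f x‖ ≤ Cf₀) (hf₁ : ∀ x, ‖fderiv ℝ f x‖ ≤ Cf₁)
    (hf₂ : ∀ x, ‖iteratedFDeriv ℝ 2 f x‖ ≤ Cf₂)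
    (hg₀ : ∀ x, ‖g x‖ ≤ Cg₀) (hg₂ : ∀ x, ‖iteratedFDeriv ℝ 2 g x‖ ≤ Cg₂)
    {ℏ : ℝ} (hℏ : 0 < ℏ) (p v v' : E) :
    ‖(-Complex.I * ℏ)⁻¹ * (f (p + (π * ℏ) • v') * g (p - (π * ℏ) • v)
        - f (p - (π * ℏ) • v') * g (p + (π * ℏ) • v)) - poissonCoeff f g v v' p‖
      ≤ ℏ * (2 * π ^ 2 * (Cf₀ * Cg₂ * ‖v‖ ^ 2 + Cf₂ * Cg₀ * ‖v'‖ ^ 2)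
          + 2 * π ^ 3 * Cf₁ * Cg₂ * ‖v'‖ * ‖v‖ ^ 2 * ℏ) := by
  set u := (π * ℏ) • v
  set u' := (π * ℏ) • v'
  have hℏ' : (ℏ : ℂ) ≠ 0 := by exact_mod_cast hℏ.ne'
  have factor : (-Complex.I * ℏ)⁻¹ * (f (p + u') * g (p - u) - f (p - u') * g (p + u))
        - poissonCoeff f g v v' p
      = (-Complex.I * ℏ)⁻¹ * (f (p + u') * g (p - u) - f (p - u') * g (p + u)
        - 2 * (fderiv ℝ f p u' * g p - f p * fderiv ℝ g p u)) := by
    simp only [poissonCoeff, u, u', map_smul, Complex.real_smul]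
    push_cast
    field_simp
    rw [Complex.I_sq]
    ring
  have hu : ‖u‖ = π * ℏ * ‖v‖ := by
    rw [norm_smul, Real.norm_of_nonneg (by positivity)]
  have hu' : ‖u'‖ = π * ℏ * ‖v'‖ := by
    rw [norm_smul, Real.norm_of_nonneg (by positivity)]
  rw [factor, norm_mul, norm_inv, norm_mul, norm_neg, Complex.norm_I, one_mul,
    Complex.norm_real, Real.norm_of_nonneg hℏ.le, inv_mul_le_iff₀ hℏ]
  refine
    (norm_shifted_mul_sub_shifted_mul_sub_le hf hg hf₀ hf₁ hf₂ hg₀ hg₂ p u u').trans_eq ?_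
  rw [hu, hu']
  ring

end Calculus

section WeightedShift

variable {ι : Type*} [AddCommGroup ι] {p : ℝ≥0∞} [Fact (1 ≤ p)]

def IsWeightedShift (A : lp (fun _ : ι => ℂ) p →L[ℂ] lp (fun _ : ι => ℂ) p) (κ : ι)
    (c : ι → ℂ) : Prop :=
  ∀ φ a, A φ a = c a * φ (a - κ)

namespace IsWeightedShift

variable {A B : lp (fun _ : ι => ℂ) p →L[ℂ] lp (fun _ : ι => ℂ) p} {κ κ' : ι} {c c' : ι → ℂ}

theorem comp (hA : IsWeightedShift A κ c) (hB : IsWeightedShift B κ' c') :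
    IsWeightedShift (A.comp B) (κ + κ') (fun a => c a * c' (a - κ)) := fun φ a => by
  rw [ContinuousLinearMap.comp_apply, hA, hB, sub_sub, mul_assoc]

theorem sub (hA : IsWeightedShift A κ c) (hB : IsWeightedShift B κ c') :
    IsWeightedShift (A - B) κ (c - c') := fun φ a => by
  rw [_root_.sub_apply, lp.coeFn_sub, Pi.sub_apply, hA, hB, Pi.sub_apply, sub_mul]

theorem smul (hA : IsWeightedShift A κ c) (z : ℂ) :
    IsWeightedShift (z • A) κ (z • c) := fun φ a => by
  rw [_root_.smul_apply, lp.coeFn_smul, Pi.smul_apply, hA, Pi.smul_apply,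
    smul_eq_mul, smul_eq_mul, mul_assoc]

theorem opNorm_le (hp : p ≠ ∞) (hA : IsWeightedShift A κ c) {M : ℝ}
    (hc : ∀ a, ‖c a‖ ≤ M) : ‖A‖ ≤ M := by
  have hM : 0 ≤ M := (norm_nonneg _).trans (hc 0)
  have hp₀ : 0 < p.toReal :=
    ENNReal.toReal_pos (zero_lt_one.trans_le Fact.out).ne' hp
  refine A.opNorm_le_bound hM fun φ =>
    lp.norm_le_of_forall_sum_le hp₀ (by positivity) fun s => ?_
  calc ∑ a ∈ s, ‖A φ a‖ ^ p.toReal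
      ≤ ∑ a ∈ s, M ^ p.toReal * ‖φ (a - κ)‖ ^ p.toReal := by
        gcongr with a
        rw [hA, norm_mul, Real.mul_rpow (norm_nonneg _) (norm_nonneg _)]
        gcongr
        exact hc a
    _ = M ^ p.toReal * ∑ b ∈ s.map (Equiv.subRight κ).toEmbedding, ‖φ b‖ ^ p.toReal := by
        rw [Finset.sum_map, Finset.mul_sum]
        rfl
    _ ≤ M ^ p.toReal * ‖φ‖ ^ p.toReal := by
        gcongr
        exact lp.sum_rpow_le_norm_rpow hp₀ φ _
    _ = (M * ‖φ‖) ^ p.toReal := (Real.mul_rpow hM (norm_nonneg _)).symm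

end IsWeightedShift

end WeightedShift

theorem smul_commutator_sum_sub_sum {R 𝕜 ι ι' : Type*} [Ring R] [Monoid 𝕜]
    [DistribMulAction 𝕜 R] (s : Finset ι) (s' : Finset ι') (c : 𝕜) (a : ι → R) (b : ι' → R)
    (r : ι → ι' → R) :
    c • ((∑ j ∈ s, a j) * (∑ i ∈ s', b i) - (∑ i ∈ s', b i) * (∑ j ∈ s, a j))
        - ∑ j ∈ s, ∑ i ∈ s', r j i
      = ∑ j ∈ s, ∑ i ∈ s', (c • (a j * b i - b i * a j) - r j i) := by
  simp only [Finset.sum_mul_sum, Finset.sum_comm (s := s') (t := s), ← Finset.sum_sub_distrib,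
    Finset.smul_sum, smul_sub]

section Quantisation

variable {n : ℕ}

/-- `T_{κ,h,ℏ}` is the weighted shift by `κ` with weight `h ∘ phasePoint ℏ κ`. -/
def phasePoint (ℏ : ℝ) (κ a : Fin n → ℤ) : Fin n → ℝ :=
  fun t => π * ℏ * (2 * (a t : ℝ) - (κ t : ℝ))

theorem phasePoint_eq_add (ℏ : ℝ) (κ κ' a : Fin n → ℤ) :
    phasePoint ℏ κ a = phasePoint ℏ (κ + κ') a + (π * ℏ) • fun t => (κ' t : ℝ) := by
  ext t
  simp only [phasePoint, Pi.add_apply, Pi.smul_apply, smul_eq_mul, Int.cast_add]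
  ring

theorem phasePoint_sub (ℏ : ℝ) (κ κ' a : Fin n → ℤ) :
    phasePoint ℏ κ' (a - κ) = phasePoint ℏ (κ + κ') a - (π * ℏ) • fun t => (κ t : ℝ) := by
  ext t
  simp only [phasePoint, Pi.add_apply, Pi.sub_apply, Pi.smul_apply, smul_eq_mul, Int.cast_add,
    Int.cast_sub]
  ring

theorem norm_smul_commutator_sub_le {f g : (Fin n → ℝ) → ℂ}
    (hf : ContDiff ℝ 2 f) (hg : ContDiff ℝ 2 g) {Cf₀ Cf₁ Cf₂ Cg₀ Cg₂ : ℝ}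
    (hf₀ : ∀ x, ‖f x‖ ≤ Cf₀) (hf₁ : ∀ x, ‖fderiv ℝ f x‖ ≤ Cf₁)
    (hf₂ : ∀ x, ‖iteratedFDeriv ℝ 2 f x‖ ≤ Cf₂)
    (hg₀ : ∀ x, ‖g x‖ ≤ Cg₀) (hg₂ : ∀ x, ‖iteratedFDeriv ℝ 2 g x‖ ≤ Cg₂)
    {ℏ : ℝ} (hℏ : 0 < ℏ) {κ κ' : Fin n → ℤ} {S S' R : ℓ2 n →L[ℂ] ℓ2 n}
    (hS : IsWeightedShift S κ (f ∘ phasePoint ℏ κ))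
    (hS' : IsWeightedShift S' κ' (g ∘ phasePoint ℏ κ'))
    (hR : IsWeightedShift R (κ + κ')
      (poissonCoeff f g (fun t => (κ t : ℝ)) (fun t => (κ' t : ℝ)) ∘ phasePoint ℏ (κ + κ'))) :
    ‖(-Complex.I * ℏ)⁻¹ • (S.comp S' - S'.comp S) - R‖
      ≤ ℏ * (2 * π ^ 2 * (Cf₀ * Cg₂ * ‖fun t => (κ t : ℝ)‖ ^ 2
            + Cf₂ * Cg₀ * ‖fun t => (κ' t : ℝ)‖ ^ 2)
          + 2 * π ^ 3 * Cf₁ * Cg₂ * ‖fun t => (κ' t : ℝ)‖ * ‖fun t => (κ t : ℝ)‖ ^ 2 * ℏ) := by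
  have hS'S := hS'.comp hS
  rw [add_comm κ' κ] at hS'S
  refine ((((hS.comp hS').sub hS'S).smul _).sub hR).opNorm_le ENNReal.ofNat_ne_top
    fun a => ?_
  simp only [Pi.sub_apply, Pi.smul_apply, Function.comp_apply, smul_eq_mul]
  -- recentre all four sample points at `phasePoint ℏ (κ + κ') a`
  rw [phasePoint_eq_add ℏ κ κ', phasePoint_sub ℏ κ κ', phasePoint_eq_add ℏ κ' κ,
    phasePoint_sub ℏ κ' κ, add_comm κ' κ, mul_comm (g _)]
  exact norm_smul_sub_poissonCoeff_le hf hg hf₀ hf₁ hf₂ hg₀ hg₂ hℏ _ _ _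

theorem tendsto_norm_smul_commutator_sub {f g : (Fin n → ℝ) → ℂ}
    (hf : ContDiff ℝ 2 f) (hg : ContDiff ℝ 2 g)
    (hfb : ∀ d : ℕ, d ≤ 2 → ∃ C : ℝ, ∀ p, ‖iteratedFDeriv ℝ d f p‖ ≤ C)
    (hgb : ∀ d : ℕ, d ≤ 2 → ∃ C : ℝ, ∀ p, ‖iteratedFDeriv ℝ d g p‖ ≤ C)
    {κ κ' : Fin n → ℤ} {S S' R : ℝ → ℓ2 n →L[ℂ] ℓ2 n}
    (hS : ∀ ℏ, 0 < ℏ → IsWeightedShift (S ℏ) κ (f ∘ phasePoint ℏ κ))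
    (hS' : ∀ ℏ, 0 < ℏ → IsWeightedShift (S' ℏ) κ' (g ∘ phasePoint ℏ κ'))
    (hR : ∀ ℏ, 0 < ℏ → IsWeightedShift (R ℏ) (κ + κ')
      (poissonCoeff f g (fun t => (κ t : ℝ)) (fun t => (κ' t : ℝ)) ∘ phasePoint ℏ (κ + κ'))) :
    Tendsto (fun ℏ : ℝ =>
        ‖(-Complex.I * ℏ)⁻¹ • ((S ℏ).comp (S' ℏ) - (S' ℏ).comp (S ℏ)) - R ℏ‖)
      (nhdsWithin 0 (Set.Ioi 0)) (nhds 0) := by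
  obtain ⟨Cf₀, hf₀⟩ := hfb 0 (by norm_num)
  obtain ⟨Cf₁, hf₁⟩ := hfb 1 (by norm_num)
  obtain ⟨Cf₂, hf₂⟩ := hfb 2 le_rfl
  obtain ⟨Cg₀, hg₀⟩ := hgb 0 (by norm_num)
  obtain ⟨Cg₂, hg₂⟩ := hgb 2 le_rfl
  simp only [norm_iteratedFDeriv_zero] at hf₀ hg₀
  simp only [norm_iteratedFDeriv_one] at hf₁
  refine squeeze_zero' (Eventually.of_forall fun _ => norm_nonneg _)
    (eventually_mem_nhdsWithin.mono fun ℏ hℏ => norm_smul_commutator_sub_le hf hg hf₀ hf₁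
      hf₂ hg₀ hg₂ hℏ (hS ℏ hℏ) (hS' ℏ hℏ) (hR ℏ hℏ)) ?_
  exact (Continuous.tendsto' (by fun_prop) 0 0 (by simp)).mono_left nhdsWithin_le_nhds

end Quantisation

theorem stmt_14_general (n : ℕ) (m m' : ℕ)
    (k : Fin m → Fin n → ℤ) (k' : Fin m' → Fin n → ℤ)
    (h : Fin m → (Fin n → ℝ) → ℂ) (h' : Fin m' → (Fin n → ℝ) → ℂ)
    (hsm : ∀ j, ContDiff ℝ 2 (h j)) (hsm' : ∀ i, ContDiff ℝ 2 (h' i))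
    (hbd : ∀ j, ∀ d : ℕ, d ≤ 2 → ∃ C : ℝ, ∀ p, ‖iteratedFDeriv ℝ d (h j) p‖ ≤ C)
    (hbd' : ∀ i, ∀ d : ℕ, d ≤ 2 → ∃ C : ℝ, ∀ p, ‖iteratedFDeriv ℝ d (h' i) p‖ ≤ C)
    (T : ℝ → Fin m → (ℓ2 n →L[ℂ] ℓ2 n))
    (T' : ℝ → Fin m' → (ℓ2 n →L[ℂ] ℓ2 n))
    (TB : ℝ → Fin m → Fin m' → (ℓ2 n →L[ℂ] ℓ2 n))
    (hT : ∀ ℏ : ℝ, 0 < ℏ → ∀ (j : Fin m) (φ : ℓ2 n) (a : Fin n → ℤ),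
      ((T ℏ j) φ) a = h j (fun i => π * ℏ * (2 * (a i : ℝ) - (k j i : ℝ))) * φ (a - k j))
    (hT' : ∀ ℏ : ℝ, 0 < ℏ → ∀ (i : Fin m') (φ : ℓ2 n) (a : Fin n → ℤ),
      ((T' ℏ i) φ) a = h' i (fun t => π * ℏ * (2 * (a t : ℝ) - (k' i t : ℝ))) * φ (a - k' i))
    (hTB : ∀ ℏ : ℝ, 0 < ℏ → ∀ (j : Fin m) (i : Fin m') (φ : ℓ2 n) (a : Fin n → ℤ),
      ((TB ℏ j i) φ) a =
        (fun p : Fin n → ℝ => (2 * π * Complex.I) *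
            (fderiv ℝ (h j) p (fun t => (k' i t : ℝ)) * h' i p -
             h j p * fderiv ℝ (h' i) p (fun t => (k j t : ℝ))))
          (fun t => π * ℏ * (2 * (a t : ℝ) - ((k j + k' i) t : ℝ))) *
        φ (a - (k j + k' i))) :
    Tendsto (fun ℏ : ℝ =>
        ‖(-(Complex.I) * (ℏ : ℂ))⁻¹ •
            ((∑ j, T ℏ j).comp (∑ i, T' ℏ i) - (∑ i, T' ℏ i).comp (∑ j, T ℏ j)) -
          ∑ j, ∑ i, TB ℏ j i‖)
      (nhdsWithin 0 (Set.Ioi 0)) (nhds 0) := by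
  have term_tendsto : ∀ j i, Tendsto (fun ℏ : ℝ => ‖(-(Complex.I) * (ℏ : ℂ))⁻¹ •
      ((T ℏ j).comp (T' ℏ i) - (T' ℏ i).comp (T ℏ j)) - TB ℏ j i‖)
      (nhdsWithin 0 (Set.Ioi 0)) (nhds 0) := fun j i =>
    tendsto_norm_smul_commutator_sub (κ := k j) (κ' := k' i) (hsm j) (hsm' i) (hbd j)
      (hbd' i) (fun ℏ hℏ => hT ℏ hℏ j) (fun ℏ hℏ => hT' ℏ hℏ i) (fun ℏ hℏ => hTB ℏ hℏ j i)
  refine squeeze_zero (fun _ => norm_nonneg _) (fun ℏ => ?_) (by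
    simpa only [Finset.sum_const_zero] using tendsto_finsetSum Finset.univ fun j _ =>
      tendsto_finsetSum Finset.univ fun i _ => term_tendsto j i)
  simp only [← ContinuousLinearMap.mul_def]
  rw [smul_commutator_sum_sub_sum]
  exact (norm_sum_le _ _).trans (Finset.sum_le_sum fun j _ => norm_sum_le _ _)

/-- Dirac's condition: ‖(−iℏ)⁻¹[Q^W_ℏ(f), Q^W_ℏ(g)] − Q^W_ℏ({f,g})‖ → 0 as ℏ → 0⁺,
for f = Σ_j e_{k_j} ⊗ h_j, g = Σ_i e_{k'_i} ⊗ h'_i with h_j, h'_i of class C² with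
bounded derivatives up to order 2, where {f,g} = Σ_{j,i} e_{k_j+k'_i} ⊗ b_{j,i} and
b_{j,i}(p) = 2πi((∇_{k'_i}h_j)(p)·h'_i(p) − h_j(p)·(∇_{k_j}h'_i)(p)). -/
theorem stmt_14 (n : ℕ) (hn : 1 ≤ n) (m m' : ℕ) (hm : 1 ≤ m) (hm' : 1 ≤ m')
    (k : Fin m → Fin n → ℤ) (k' : Fin m' → Fin n → ℤ)
    (h : Fin m → (Fin n → ℝ) → ℂ) (h' : Fin m' → (Fin n → ℝ) → ℂ)
    (hsm : ∀ j, ContDiff ℝ 2 (h j)) (hsm' : ∀ i, ContDiff ℝ 2 (h' i))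
    (hbd : ∀ j, ∀ d : ℕ, d ≤ 2 → ∃ C : ℝ, ∀ p, ‖iteratedFDeriv ℝ d (h j) p‖ ≤ C)
    (hbd' : ∀ i, ∀ d : ℕ, d ≤ 2 → ∃ C : ℝ, ∀ p, ‖iteratedFDeriv ℝ d (h' i) p‖ ≤ C)
    (T : ℝ → Fin m → (ℓ2 n →L[ℂ] ℓ2 n))
    (T' : ℝ → Fin m' → (ℓ2 n →L[ℂ] ℓ2 n))
    (TB : ℝ → Fin m → Fin m' → (ℓ2 n →L[ℂ] ℓ2 n))
    (hT : ∀ ℏ : ℝ, 0 < ℏ → ∀ (j : Fin m) (φ : ℓ2 n) (a : Fin n → ℤ),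
      ((T ℏ j) φ) a = h j (fun i => π * ℏ * (2 * (a i : ℝ) - (k j i : ℝ))) * φ (a - k j))
    (hT' : ∀ ℏ : ℝ, 0 < ℏ → ∀ (i : Fin m') (φ : ℓ2 n) (a : Fin n → ℤ),
      ((T' ℏ i) φ) a = h' i (fun t => π * ℏ * (2 * (a t : ℝ) - (k' i t : ℝ))) * φ (a - k' i))
    (hTB : ∀ ℏ : ℝ, 0 < ℏ → ∀ (j : Fin m) (i : Fin m') (φ : ℓ2 n) (a : Fin n → ℤ),
      ((TB ℏ j i) φ) a =
        (fun p : Fin n → ℝ => (2 * π * Complex.I) *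
            (fderiv ℝ (h j) p (fun t => (k' i t : ℝ)) * h' i p -
             h j p * fderiv ℝ (h' i) p (fun t => (k j t : ℝ))))
          (fun t => π * ℏ * (2 * (a t : ℝ) - ((k j + k' i) t : ℝ))) *
        φ (a - (k j + k' i))) :
    Tendsto (fun ℏ : ℝ =>
        ‖(-(Complex.I) * (ℏ : ℂ))⁻¹ •
            ((∑ j, T ℏ j).comp (∑ i, T' ℏ i) - (∑ i, T' ℏ i).comp (∑ j, T ℏ j)) -
          ∑ j, ∑ i, TB ℏ j i‖)
      (nhdsWithin 0 (Set.Ioi 0)) (nhds 0) :=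
  stmt_14_general n m m' k k' h h' hsm hsm' hbd hbd' T T' TB hT hT' hTB
end
end

section
/- Fix ℏ₀ > 0 and define h : ℝⁿ → ℝ by h(p) = sin(p₁/ℏ₀). Then: (i) T_{0,h,ℏ₀} = 0, so ‖T_{0,h,ℏ₀}‖ = 0; (ii) for every integer N ≥ 1, setting ℏ_N = ℏ₀(1 + 1/(4N)), one has ‖T_{0,h,ℏ_N}‖ = 1; and (iii) consequently the function ℏ ↦ ‖T_{0,h,ℏ}‖ on (0,∞) is not continuous at ℏ₀. (This shows that the map ℏ ↦ ‖Q^W_ℏ(f)‖ can fail to be continuous at points ℏ₀ > 0.) -/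
open scoped Real
open Filter MeasureTheory

noncomputable section

/-!
At `ℏ = ℏ₀` the multiplier `a ↦ sin (2π (ℏ/ℏ₀) a₁)` of `T ℏ` vanishes on the lattice `ℤⁿ`, so
`T ℏ₀ = 0`. At `ℏ_N = ℏ₀ (1 + 1/(4N))` it takes the value `sin (2πN + π/2) = 1` at any `a` with
`a₁ = N`, and a multiplication operator on `ℓ²` has norm `sup |multiplier| = 1`. Since `ℏ_N → ℏ₀`,
the norm jumps from `1` to `0` at `ℏ₀`.
-/

open Topology

section MultiplicationOperator

variable {ι 𝕜 : Type*} [NontriviallyNormedField 𝕜] {p : ENNReal} [Fact (1 ≤ p)]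
  {A : lp (fun _ : ι => 𝕜) p →L[𝕜] lp (fun _ : ι => 𝕜) p} {m : ι → 𝕜}

lemma opNorm_le_one_of_apply_eq_mul (hA : ∀ φ i, A φ i = m i * φ i) (hm : ∀ i, ‖m i‖ ≤ 1) :
    ‖A‖ ≤ 1 := by
  refine A.opNorm_le_bound zero_le_one fun φ => ?_
  rw [one_mul]
  refine lp.norm_mono (zero_lt_one.trans_le Fact.out).ne' fun i => ?_
  rw [hA, norm_mul]
  exact mul_le_of_le_one_left (norm_nonneg _) (hm i)

lemma norm_le_opNorm_of_apply_eq_mul (hA : ∀ φ i, A φ i = m i * φ i) (i : ι) : ‖m i‖ ≤ ‖A‖ := by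
  classical
  have hp : 0 < p := zero_lt_one.trans_le Fact.out
  have hAδ : A (lp.single p i 1) = lp.single p i (m i) := by
    ext j
    rw [hA, lp.single_apply, lp.single_apply]
    rcases eq_or_ne j i with rfl | hij <;> simp [*]
  simpa [hAδ, lp.norm_single hp] using A.le_opNorm (lp.single p i 1)

end MultiplicationOperator

lemma not_continuousWithinAt_of_tendsto_of_eventually_eq {α β γ : Type*} [TopologicalSpace α]
    [TopologicalSpace β] [T2Space β] {l : Filter γ} [l.NeBot] {f : α → β} {s : Set α} {x : α}
    {u : γ → α} {b : β} (hu : Tendsto u l (𝓝[s] x)) (hfu : ∀ᶠ k in l, f (u k) = b)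
    (hb : b ≠ f x) : ¬ ContinuousWithinAt f s x := fun hf =>
  hb <| tendsto_nhds_unique (tendsto_const_nhds.congr' (hfu.mono fun _ h => h.symm))
    (hf.tendsto.comp hu)

lemma tendsto_mul_one_add_one_div_four_mul {c : ℝ} (hc : 0 < c) :
    Tendsto (fun N : ℕ => c * (1 + 1 / (4 * (N : ℝ)))) atTop (𝓝[Set.Ioi 0] c) := by
  refine tendsto_nhdsWithin_iff.2
    ⟨?_, Eventually.of_forall fun N => Set.mem_Ioi.2 (by positivity)⟩
  have h : Tendsto (fun N : ℕ => 1 / (4 * (N : ℝ))) atTop (𝓝 0) :=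
    tendsto_const_nhds.div_atTop (tendsto_natCast_atTop_atTop.const_mul_atTop four_pos)
  simpa using (h.const_add 1).const_mul c

lemma sin_two_pi_mul_one_add_one_div_four_mul_self {N : ℕ} (hN : N ≠ 0) :
    Real.sin (2 * π * (1 + 1 / (4 * (N : ℝ))) * N) = 1 := by
  have h : 2 * π * (1 + 1 / (4 * (N : ℝ))) * N = π / 2 + (N : ℤ) * (2 * π) := by
    field_simp
    push_cast
    ring
  rw [h, Real.sin_add_int_mul_two_pi, Real.sin_pi_div_two]

/-- Counterexample to continuity of ℏ ↦ ‖Q^W_ℏ(f)‖ at ℏ₀ > 0: with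
h(p) = sin(p₁/ℏ₀) one has T_{0,h,ℏ₀} = 0, while ‖T_{0,h,ℏ_N}‖ = 1 for
ℏ_N = ℏ₀(1 + 1/(4N)); hence ℏ ↦ ‖T_{0,h,ℏ}‖ is not continuous at ℏ₀ on (0,∞). -/
theorem stmt_15 (n : ℕ) (hn : 0 < n) (ℏ₀ : ℝ) (hℏ₀ : 0 < ℏ₀)
    (T : ℝ → (ℓ2 n →L[ℂ] ℓ2 n))
    (hT : ∀ ℏ : ℝ, 0 < ℏ → ∀ (φ : ℓ2 n) (a : Fin n → ℤ),
      ((T ℏ) φ) a =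
        ((Real.sin ((π * ℏ * (2 * (a ⟨0, hn⟩ : ℝ) - ((0 : Fin n → ℤ) ⟨0, hn⟩ : ℝ))) / ℏ₀) : ℝ) : ℂ) *
          φ (a - 0)) :
    T ℏ₀ = 0 ∧ ‖T ℏ₀‖ = 0 ∧
    (∀ N : ℕ, 1 ≤ N → ‖T (ℏ₀ * (1 + 1 / (4 * (N : ℝ))))‖ = 1) ∧
    ¬ ContinuousWithinAt (fun ℏ : ℝ => ‖T ℏ‖) (Set.Ioi 0) ℏ₀ := by
  have hmul : ∀ ℏ, 0 < ℏ → ∀ φ a,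
      T ℏ φ a = (Real.sin (2 * π * (ℏ / ℏ₀) * a ⟨0, hn⟩) : ℂ) * φ a := by
    intro ℏ hℏ φ a
    rw [hT ℏ hℏ, sub_zero, Pi.zero_apply, Int.cast_zero, sub_zero]
    congr 3
    ring
  have hzero : T ℏ₀ = 0 := by
    ext φ a
    rw [hmul ℏ₀ hℏ₀, div_self hℏ₀.ne', mul_one,
      Real.sin_eq_zero_iff.2 ⟨2 * a ⟨0, hn⟩, by push_cast; ring⟩]
    simp
  have hone : ∀ N : ℕ, 1 ≤ N → ‖T (ℏ₀ * (1 + 1 / (4 * (N : ℝ))))‖ = 1 := by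
    intro N hN
    have hmulN := hmul _ (by positivity : 0 < ℏ₀ * (1 + 1 / (4 * (N : ℝ))))
    rw [mul_div_cancel_left₀ _ hℏ₀.ne'] at hmulN
    refine le_antisymm (opNorm_le_one_of_apply_eq_mul hmulN fun a => ?_) ?_
    · rw [Complex.norm_real, Real.norm_eq_abs]
      exact Real.abs_sin_le_one _
    · have hN1 := norm_le_opNorm_of_apply_eq_mul hmulN (fun _ => (N : ℤ))
      rwa [Int.cast_natCast, sin_two_pi_mul_one_add_one_div_four_mul_self (by omega),
        Complex.ofReal_one, norm_one] at hN1
  refine ⟨hzero, by simp [hzero], hone, ?_⟩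
  exact not_continuousWithinAt_of_tendsto_of_eventually_eq
    (tendsto_mul_one_add_one_div_four_mul hℏ₀) ((eventually_ge_atTop 1).mono hone)
    (by simp [hzero])
end
end

section
/- (Lower half of Rieffel's condition.) Let m ≥ 1, let k_1, …, k_m ∈ ℤⁿ, and let h_1, …, h_m : ℝⁿ → ℂ be bounded and uniformly continuous. Then for every ε > 0 there exists ℏ₂ > 0 such that for every ℏ ∈ (0, ℏ₂], sup_{x ∈ ℝⁿ, p ∈ ℝⁿ} | Σ_{j=1}^m e^{2πi k_j·x} h_j(p) | < ‖ Σ_{j=1}^m T_{k_j,h_j,ℏ} ‖ + ε, where the norm is the operator norm on ℓ²(ℤⁿ). -/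
/-!
Fix a point `(x₀, p₀)` where the symbol `Σⱼ e^{2πi kⱼ·x} hⱼ(p)` nearly attains its supremum, and
test `A = Σⱼ Tⱼ` against the plane wave `a ↦ e^{-2πi a·x₀}` cut off to a cube of `Nⁿ` lattice
points around `p₀ / (2πℏ)`. On that state `Tⱼ` shifts the cube by `kⱼ`, picks up the phase
`e^{2πi kⱼ·x₀}`, and multiplies by `hⱼ` at Weyl momenta which, once `ℏ N` is small, lie so close
to `p₀` that uniform continuity replaces them by `hⱼ(p₀)`. Apart from a boundary layer of relative
size `2nK/N`, where `K` bounds the `kⱼ`, this gives `⟪φ, A φ⟫ ≈ Nⁿ · symbol(x₀, p₀)`, while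
`|⟪φ, A φ⟫| ≤ ‖A‖ ‖φ‖² = ‖A‖ Nⁿ`.
-/

open scoped Real
open Filter MeasureTheory

noncomputable section

open Finset
open scoped InnerProductSpace ComplexConjugate

theorem norm_le_opNorm_add_of_norm_inner_sub_le {𝕜 E : Type*} [RCLike 𝕜] [NormedAddCommGroup E]
    [InnerProductSpace 𝕜 E] (A : E →L[𝕜] E) {φ : E} (hφ : φ ≠ 0) {z : 𝕜} {η : ℝ}
    (h : ‖⟪φ, A φ⟫_𝕜 - ((‖φ‖ ^ 2 : ℝ) : 𝕜) * z‖ ≤ ‖φ‖ ^ 2 * η) : ‖z‖ ≤ ‖A‖ + η := by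
  have hpos : 0 < ‖φ‖ ^ 2 := by positivity
  have hinner : ‖⟪φ, A φ⟫_𝕜‖ ≤ ‖A‖ * ‖φ‖ ^ 2 :=
    calc ‖⟪φ, A φ⟫_𝕜‖ ≤ ‖φ‖ * (‖A‖ * ‖φ‖) :=
          (norm_inner_le_norm _ _).trans (by gcongr; exact A.le_opNorm φ)
      _ = ‖A‖ * ‖φ‖ ^ 2 := by ring
  refine le_of_mul_le_mul_left ?_ hpos
  calc ‖φ‖ ^ 2 * ‖z‖ = ‖((‖φ‖ ^ 2 : ℝ) : 𝕜) * z‖ := by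
        rw [norm_mul, RCLike.norm_ofReal, abs_of_pos hpos]
    _ ≤ ‖⟪φ, A φ⟫_𝕜‖ + ‖⟪φ, A φ⟫_𝕜 - ((‖φ‖ ^ 2 : ℝ) : 𝕜) * z‖ := norm_le_norm_add_norm_sub _ _
    _ ≤ ‖φ‖ ^ 2 * (‖A‖ + η) := by linarith

theorem exists_iSup_iSup_lt_add {α β : Type*} [Nonempty α] [Nonempty β] (f : α → β → ℝ) {ε : ℝ}
    (hε : 0 < ε) : ∃ a b, ⨆ a, ⨆ b, f a b < f a b + ε := by
  obtain ⟨a, ha⟩ := exists_lt_of_lt_ciSup (sub_lt_self (⨆ a, ⨆ b, f a b) (half_pos hε))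
  obtain ⟨b, hb⟩ := exists_lt_of_lt_ciSup (sub_lt_self (⨆ b, f a b) (half_pos hε))
  exact ⟨a, b, by linarith⟩

theorem norm_sum_sub_card_nsmul_le {ι E : Type*} [SeminormedAddCommGroup E] {R Q : Finset ι}
    (hRQ : R ⊆ Q) {g : ι → E} {z : E} {η : ℝ} (hg : ∀ a ∈ R, ‖g a - z‖ ≤ η) :
    ‖∑ a ∈ R, g a - #Q • z‖ ≤ #R * η + (#Q - #R) * ‖z‖ := by
  have hsplit : ∑ a ∈ R, g a - #Q • z = ∑ a ∈ R, (g a - z) - (#Q - #R) • z := by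
    rw [sum_sub_distrib, sum_const, sub_sub, ← add_nsmul, Nat.add_sub_cancel' (card_le_card hRQ)]
  rw [hsplit]
  calc _ ≤ ‖∑ a ∈ R, (g a - z)‖ + ‖(#Q - #R) • z‖ := norm_sub_le _ _
    _ ≤ ∑ a ∈ R, η + (#Q - #R : ℕ) * ‖z‖ := add_le_add (norm_sum_le_of_le _ hg) norm_nsmul_le
    _ = #R * η + (#Q - #R) * ‖z‖ := by
        rw [sum_const, nsmul_eq_mul, Nat.cast_sub (card_le_card hRQ)]

theorem pow_mul_one_sub_le_sub_pow {N d : ℝ} (hN : 0 < N) (hd : d ≤ 2 * N) (n : ℕ) :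
    N ^ n * (1 - n * d / N) ≤ (N - d) ^ n := by
  have hbern := one_add_mul_le_pow (a := -(d / N))
    (by rw [neg_le_neg_iff, div_le_iff₀ hN]; linarith) n
  calc N ^ n * (1 - n * d / N) = N ^ n * (1 + n * -(d / N)) := by ring
    _ ≤ N ^ n * (1 + -(d / N)) ^ n := by gcongr
    _ = (N - d) ^ n := by rw [← mul_pow]; congr 1; field_simp; ring

section Lattice

variable {n : ℕ}

def phase (x : Fin n → ℝ) (k : Fin n → ℤ) : ℂ :=
  Complex.exp (2 * π * Complex.I * ((∑ i, (k i : ℝ) * x i : ℝ) : ℂ))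

theorem norm_phase (x : Fin n → ℝ) (k : Fin n → ℤ) : ‖phase x k‖ = 1 := by
  rw [phase, mul_comm, ← mul_assoc, ← Complex.ofReal_ofNat, ← Complex.ofReal_mul,
    ← Complex.ofReal_mul]
  exact Complex.norm_exp_ofReal_mul_I _

theorem phase_mul_conj_phase (x : Fin n → ℝ) (a b : Fin n → ℤ) :
    phase x a * conj (phase x b) = phase x (a - b) := by
  simp only [phase, ← Complex.exp_conj, ← Complex.exp_add, map_mul, Complex.conj_ofReal,
    Complex.conj_I, map_ofNat, Pi.sub_apply, Int.cast_sub, sub_mul, sum_sub_distrib]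
  push_cast
  ring_nf

def wavePacket (x : Fin n → ℝ) (Q : Finset (Fin n → ℤ)) : ℓ2 n :=
  ∑ a ∈ Q, lp.single 2 a (conj (phase x a))

theorem wavePacket_apply (x : Fin n → ℝ) (Q : Finset (Fin n → ℤ)) (b : Fin n → ℤ) :
    (wavePacket x Q : (Fin n → ℤ) → ℂ) b = if b ∈ Q then conj (phase x b) else 0 := by
  classical
  simp only [wavePacket, lp.coeFn_sum, Finset.sum_apply, lp.single_apply, sum_pi_single]

theorem norm_wavePacket_sq (x : Fin n → ℝ) (Q : Finset (Fin n → ℤ)) :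
    ‖wavePacket x Q‖ ^ 2 = #Q := by
  classical
  have h := lp.norm_sum_single (E := fun _ : Fin n → ℤ => ℂ) (p := 2) (by norm_num)
    (fun a => conj (phase x a)) Q
  simp only [ENNReal.toReal_ofNat, Complex.norm_conj, norm_phase, Real.one_rpow, sum_const,
    nsmul_eq_mul, mul_one] at h
  exact_mod_cast h

theorem inner_wavePacket_left (x : Fin n → ℝ) (Q : Finset (Fin n → ℤ)) (ψ : ℓ2 n) :
    ⟪wavePacket x Q, ψ⟫_ℂ = ∑ a ∈ Q, phase x a * ψ a := by
  classical
  simp only [wavePacket, sum_inner, lp.inner_single_left, RCLike.inner_apply,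
    Complex.conj_conj, mul_comm]

theorem inner_wavePacket_weightedShift (x : Fin n → ℝ) (Q : Finset (Fin n → ℤ))
    {T : ℓ2 n →L[ℂ] ℓ2 n} {g : (Fin n → ℤ) → ℂ} {k : Fin n → ℤ}
    (hT : ∀ φ a, T φ a = g a * φ (a - k)) :
    ⟪wavePacket x Q, T (wavePacket x Q)⟫_ℂ = phase x k * ∑ a ∈ Q with a - k ∈ Q, g a := by
  rw [inner_wavePacket_left, mul_sum, sum_filter]
  refine sum_congr rfl fun a _ => ?_
  rw [hT, wavePacket_apply]
  split_ifs
  · calc phase x a * (g a * conj (phase x (a - k))) = phase x a * conj (phase x (a - k)) * g a := by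
          ring
      _ = phase x k * g a := by rw [phase_mul_conj_phase, sub_sub_cancel]
  · simp

def cube (a₀ : Fin n → ℤ) (N : ℕ) : Finset (Fin n → ℤ) :=
  Fintype.piFinset fun i => Ico (a₀ i) (a₀ i + N)

theorem card_cube (a₀ : Fin n → ℤ) (N : ℕ) : #(cube a₀ N) = N ^ n := by
  simp [cube, Fintype.card_piFinset, Int.card_Ico]

theorem cube_subset_filter_sub_mem (a₀ : Fin n → ℤ) {N K : ℕ} {k : Fin n → ℤ}
    (hk : ∀ i, |k i| ≤ K) :
    cube (fun i => a₀ i + K) (N - 2 * K) ⊆ {a ∈ cube a₀ N | a - k ∈ cube a₀ N} := by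
  intro a ha
  simp only [cube, mem_filter, Fintype.mem_piFinset, mem_Ico, Pi.sub_apply] at ha ⊢
  have hk' := fun i => abs_le.mp (hk i)
  constructor <;> intro i <;> have := ha i <;> have := hk' i <;> omega

theorem card_filter_sub_mem_cube_ge (a₀ : Fin n → ℤ) {N K : ℕ} (hN : 0 < N) (hKN : 2 * K ≤ N)
    {k : Fin n → ℤ} (hk : ∀ i, |k i| ≤ K) :
    (N : ℝ) ^ n * (1 - n * (2 * K) / N) ≤ #{a ∈ cube a₀ N | a - k ∈ cube a₀ N} := by
  have hKN' : (2 * K : ℝ) ≤ N := by exact_mod_cast hKN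
  calc (N : ℝ) ^ n * (1 - n * (2 * K) / N) ≤ ((N : ℝ) - 2 * K) ^ n :=
        pow_mul_one_sub_le_sub_pow (by exact_mod_cast hN) (by linarith) n
    _ = #(cube (fun i => a₀ i + K) (N - 2 * K)) := by
        rw [card_cube, Nat.cast_pow, Nat.cast_sub hKN]; push_cast; rfl
    _ ≤ #{a ∈ cube a₀ N | a - k ∈ cube a₀ N} := by
        exact_mod_cast card_le_card (cube_subset_filter_sub_mem a₀ hk)

theorem norm_inner_wavePacket_cube_sub_le (x : Fin n → ℝ) (a₀ : Fin n → ℤ) {N K : ℕ}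
    (hN : 0 < N) (hKN : 2 * K ≤ N) {k : Fin n → ℤ} (hk : ∀ i, |k i| ≤ K)
    {T : ℓ2 n →L[ℂ] ℓ2 n} {g : (Fin n → ℤ) → ℂ} (hT : ∀ φ a, T φ a = g a * φ (a - k))
    {z : ℂ} {η : ℝ} (hη : 0 ≤ η) (hg : ∀ a ∈ cube a₀ N, ‖g a - z‖ ≤ η) :
    ‖⟪wavePacket x (cube a₀ N), T (wavePacket x (cube a₀ N))⟫_ℂ
        - #(cube a₀ N) * (phase x k * z)‖ ≤ #(cube a₀ N) * (η + n * (2 * K) / N * ‖z‖) := by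
  set Q := cube a₀ N
  set R := {a ∈ Q | a - k ∈ Q}
  have hRQ : R ⊆ Q := filter_subset _ _
  have hR : (#Q : ℝ) - #R ≤ #Q * (n * (2 * K) / N) := by
    have := card_filter_sub_mem_cube_ge a₀ hN hKN hk
    rw [card_cube]; push_cast at this ⊢; linarith
  have hsum := norm_sum_sub_card_nsmul_le hRQ (fun a ha => hg a (hRQ ha))
  have hRQ' : (#R : ℝ) ≤ #Q := by exact_mod_cast card_le_card hRQ
  rw [inner_wavePacket_weightedShift x Q hT, ← mul_left_comm, ← mul_sub, norm_mul, norm_phase,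
    one_mul, ← nsmul_eq_mul]
  calc _ ≤ #R * η + (#Q - #R) * ‖z‖ := hsum
    _ ≤ #Q * η + #Q * (n * (2 * K) / N) * ‖z‖ := by gcongr
    _ = #Q * (η + n * (2 * K) / N * ‖z‖) := by ring

theorem norm_inner_wavePacket_cube_sum_sub_le {m : ℕ} (x : Fin n → ℝ) (a₀ : Fin n → ℤ)
    {N K : ℕ} (hN : 0 < N) (hKN : 2 * K ≤ N) {k : Fin m → Fin n → ℤ} (hk : ∀ j i, |k j i| ≤ K)
    {T : Fin m → ℓ2 n →L[ℂ] ℓ2 n} {g : Fin m → (Fin n → ℤ) → ℂ}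
    (hT : ∀ j φ a, T j φ a = g j a * φ (a - k j)) {z : Fin m → ℂ} {η : ℝ} (hη : 0 ≤ η)
    (hg : ∀ j, ∀ a ∈ cube a₀ N, ‖g j a - z j‖ ≤ η) :
    ‖⟪wavePacket x (cube a₀ N), (∑ j, T j) (wavePacket x (cube a₀ N))⟫_ℂ
        - #(cube a₀ N) * ∑ j, phase x (k j) * z j‖
      ≤ #(cube a₀ N) * (m * η + n * (2 * K) / N * ∑ j, ‖z j‖) := by
  rw [_root_.sum_apply, inner_sum, mul_sum, ← sum_sub_distrib]
  calc _ ≤ ∑ j, #(cube a₀ N) * (η + n * (2 * K) / N * ‖z j‖) := norm_sum_le_of_le _ fun j _ =>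
        norm_inner_wavePacket_cube_sub_le x a₀ hN hKN (hk j) (hT j) hη (hg j)
    _ = _ := by
        rw [← mul_sum, sum_add_distrib, ← mul_sum, sum_const, card_univ, Fintype.card_fin,
          nsmul_eq_mul]

/-- The midpoint `2πℏ (a + (a - k)) / 2` of the momenta of `δ_a` and `δ_{a-k}`: the point at which
the Weyl rule evaluates the symbol of a shift by `k`. -/
def weylMomentum (ℏ : ℝ) (k a : Fin n → ℤ) : Fin n → ℝ :=
  fun i => π * ℏ * (2 * (a i : ℝ) - (k i : ℝ))

theorem dist_weylMomentum_le {ℏ : ℝ} (hℏ : 0 < ℏ) (p : Fin n → ℝ) {N K : ℕ} {k : Fin n → ℤ}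
    (hk : ∀ i, |k i| ≤ K) {a : Fin n → ℤ}
    (ha : a ∈ cube (fun i => ⌊p i / (2 * π * ℏ)⌋) N) :
    dist (weylMomentum ℏ k a) p ≤ π * ℏ * (2 * N + K) := by
  refine (dist_pi_le_iff (by positivity)).2 fun i => ?_
  simp only [cube, Fintype.mem_piFinset, mem_Ico] at ha
  set t := p i / (2 * π * ℏ)
  have hp : p i = π * ℏ * (2 * t) := by simp only [t]; field_simp
  have hN : (1 : ℝ) ≤ N := by have := ha i; exact_mod_cast (by omega : (1 : ℤ) ≤ N)
  have hlo : (⌊t⌋ : ℝ) ≤ a i := by exact_mod_cast (ha i).1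
  have hhi : (a i : ℝ) + 1 ≤ ⌊t⌋ + N := by exact_mod_cast (ha i).2
  have hkK : |(k i : ℝ)| ≤ K := by exact_mod_cast hk i
  rw [Real.dist_eq, weylMomentum, hp, ← mul_sub, abs_mul, abs_of_pos (by positivity)]
  gcongr
  rw [abs_le] at hkK ⊢
  constructor <;> linarith [Int.floor_le t, Int.lt_floor_add_one t]

end Lattice

theorem exists_norm_symbol_le_opNorm_add {n m : ℕ} {k : Fin m → Fin n → ℤ}
    {h : Fin m → (Fin n → ℝ) → ℂ} (huc : ∀ j, UniformContinuous (h j))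
    {T : ℝ → Fin m → (ℓ2 n →L[ℂ] ℓ2 n)}
    (hT : ∀ ℏ : ℝ, 0 < ℏ → ∀ j φ a, T ℏ j φ a = h j (weylMomentum ℏ (k j) a) * φ (a - k j))
    (x₀ p₀ : Fin n → ℝ) {ε : ℝ} (hε : 0 < ε) :
    ∃ ℏ₂ > 0, ∀ ℏ, 0 < ℏ → ℏ ≤ ℏ₂ → ‖∑ j, phase x₀ (k j) * h j p₀‖ ≤ ‖∑ j, T ℏ j‖ + ε := by
  obtain ⟨K, hK⟩ : ∃ K : ℕ, ∀ j i, |k j i| ≤ K := by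
    obtain ⟨K, hK⟩ := Finite.exists_le fun ji : Fin m × Fin n => (k ji.1 ji.2).natAbs
    exact ⟨K, fun j i => by rw [Int.abs_eq_natAbs]; exact_mod_cast hK (j, i)⟩
  set M := ∑ j, ‖h j p₀‖
  set ε' := ε / (2 * (m + 1))
  have hε' : 0 < ε' := by positivity
  obtain ⟨δ, hδ, hclose⟩ :=
    Metric.uniformContinuous_iff.mp (uniformContinuous_pi.mpr huc) ε' hε'
  obtain ⟨N, hN⟩ := exists_nat_ge (max (4 * n * K * M / ε) (2 * K + 1))
  have hKN' : (2 * K + 1 : ℝ) ≤ N := le_of_max_le_right hN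
  have hN0 : 0 < N := by exact_mod_cast (by linarith : (0 : ℝ) < N)
  have hKN : 2 * K ≤ N := by exact_mod_cast (by linarith : (2 * K : ℝ) ≤ N)
  refine ⟨δ / (π * (2 * N + K + 1)), by positivity, fun ℏ hℏ hℏ₂ => ?_⟩
  set Q := cube (fun i => ⌊p₀ i / (2 * π * ℏ)⌋) N
  have hh : ∀ j, ∀ a ∈ Q, ‖h j (weylMomentum ℏ (k j) a) - h j p₀‖ ≤ ε' := by
    intro j a ha
    have hd : dist (weylMomentum ℏ (k j) a) p₀ < δ :=
      calc _ ≤ π * ℏ * (2 * N + K) := dist_weylMomentum_le hℏ p₀ (hK j) ha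
        _ < π * ℏ * (2 * N + K + 1) := mul_lt_mul_of_pos_left (by linarith) (by positivity)
        _ ≤ δ := by rw [le_div_iff₀ (by positivity)] at hℏ₂; linarith
    rw [← dist_eq_norm]
    exact ((dist_le_pi_dist _ _ j).trans_lt (hclose hd)).le
  have herr := norm_inner_wavePacket_cube_sum_sub_le x₀ _ hN0 hKN hK (hT ℏ hℏ) hε'.le hh
  have hbudget : m * ε' + n * (2 * K) / N * M ≤ ε := by
    have hm : m * ε' ≤ ε / 2 := by
      rw [mul_div, div_le_div_iff₀ (by positivity) two_pos]; nlinarith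
    have hM : n * (2 * K) / N * M ≤ ε / 2 := by
      have := le_of_max_le_left hN
      rw [div_le_iff₀ hε] at this
      rw [div_mul_eq_mul_div, div_le_iff₀ (by positivity)]; nlinarith
    linarith
  have hφ : ‖wavePacket x₀ Q‖ ^ 2 = #Q := norm_wavePacket_sq x₀ Q
  have hQ : (0 : ℝ) < #Q := by rw [card_cube]; positivity
  refine norm_le_opNorm_add_of_norm_inner_sub_le _ (φ := wavePacket x₀ Q) (fun h0 => ?_) ?_
  · rw [h0, norm_zero, zero_pow two_ne_zero] at hφ; linarith
  · rw [hφ]; exact_mod_cast herr.trans (by gcongr)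

theorem stmt_18_general (n : ℕ) (m : ℕ)
    (k : Fin m → Fin n → ℤ) (h : Fin m → (Fin n → ℝ) → ℂ)
    (huc : ∀ j, UniformContinuous (h j))
    (T : ℝ → Fin m → (ℓ2 n →L[ℂ] ℓ2 n))
    (hT : ∀ ℏ : ℝ, 0 < ℏ → ∀ (j : Fin m) (φ : ℓ2 n) (a : Fin n → ℤ),
      ((T ℏ j) φ) a = h j (fun i => π * ℏ * (2 * (a i : ℝ) - (k j i : ℝ))) * φ (a - k j)) :
    ∀ ε : ℝ, 0 < ε → ∃ ℏ₂ : ℝ, 0 < ℏ₂ ∧ ∀ ℏ : ℝ, 0 < ℏ → ℏ ≤ ℏ₂ →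
      (⨆ x : Fin n → ℝ, ⨆ p : Fin n → ℝ, ‖(∑ j,
        Complex.exp (2 * π * Complex.I * ((∑ i, (k j i : ℝ) * x i : ℝ) : ℂ)) * h j p)‖)
        < ‖∑ j, T ℏ j‖ + ε := by
  intro ε hε
  obtain ⟨x₀, p₀, hsup⟩ :=
    exists_iSup_iSup_lt_add (fun x p => ‖∑ j, phase x (k j) * h j p‖) (half_pos hε)
  obtain ⟨ℏ₂, hℏ₂, hsymbol⟩ := exists_norm_symbol_le_opNorm_add huc hT x₀ p₀ (half_pos hε)
  exact ⟨ℏ₂, hℏ₂, fun ℏ hℏ hℏle => hsup.trans_le (by linarith [hsymbol ℏ hℏ hℏle])⟩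

/-- Lower half of Rieffel's condition: for small ℏ > 0,
sup_{x,p} |Σ_j e^{2πi k_j·x} h_j(p)| < ‖Σ_j T_{k_j,h_j,ℏ}‖ + ε. -/
theorem stmt_18 (n : ℕ) (hn : 1 ≤ n) (m : ℕ) (hm : 1 ≤ m)
    (k : Fin m → Fin n → ℤ) (h : Fin m → (Fin n → ℝ) → ℂ)
    (hbd : ∀ j, ∃ C : ℝ, ∀ p, ‖h j p‖ ≤ C)
    (huc : ∀ j, UniformContinuous (h j))
    (T : ℝ → Fin m → (ℓ2 n →L[ℂ] ℓ2 n))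
    (hT : ∀ ℏ : ℝ, 0 < ℏ → ∀ (j : Fin m) (φ : ℓ2 n) (a : Fin n → ℤ),
      ((T ℏ j) φ) a = h j (fun i => π * ℏ * (2 * (a i : ℝ) - (k j i : ℝ))) * φ (a - k j)) :
    ∀ ε : ℝ, 0 < ε → ∃ ℏ₂ : ℝ, 0 < ℏ₂ ∧ ∀ ℏ : ℝ, 0 < ℏ → ℏ ≤ ℏ₂ →
      (⨆ x : Fin n → ℝ, ⨆ p : Fin n → ℝ, ‖(∑ j,
        Complex.exp (2 * π * Complex.I * ((∑ i, (k j i : ℝ) * x i : ℝ) : ℂ)) * h j p)‖)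
        < ‖∑ j, T ℏ j‖ + ε :=
  stmt_18_general n m k h huc T hT
end
end
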